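/- arXiv:2511.08471 — 8 statements merged into one kernel-verified Lean document; each statement's English description precedes it below -/
import Mathlib

section
/- For any positive integer n and real angle θ, the y-coordinate of the branch tip of any path P_n = T₁T₂⋯T_n, where each T_i is either the block LR or the block RL, equals the y-coordinate of the branch tip of the path (LR)^n. Formally: if each step of the path multiplies the current direction vector by r·e^{iθ} (for L) or r·e^{-iθ} (for R), starting from direction i, then the sum of the imaginary parts of the 2n partial products is independent of the choices T_i ∈ {LR, RL}. -/
/-- The sign (+1 for L, -1 for R) of step `p` (0-indexed) in the path
`T₁T₂⋯Tₙ` where block `Tⱼ` is `LR` if `T j = true` and `RL` otherwise. -/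
def stepSign {n : ℕ} (T : Fin n → Bool) (p : ℕ) : ℤ :=
  if h : p < 2 * n then
    (if T ⟨p / 2, by omega⟩ = decide (p % 2 = 0) then 1 else -1)
  else 0

/-- The y-coordinate of the endpoint of the finite path encoded by `T`:
the imaginary part of the sum of the trunk `i` and all branch vectors
`i r^m e^{i s_m θ}`, where `s_m` is the sum of the first `m` step signs. -/
noncomputable def tipY (r θ : ℝ) {n : ℕ} (T : Fin n → Bool) : ℝ :=
  (∑ m ∈ Finset.range (2 * n + 1),
    Complex.I * (r : ℂ) ^ m *
      Complex.exp ((((∑ p ∈ Finset.range m, stepSign T p : ℤ) : ℝ) : ℂ) * θ * Complex.I)).im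

lemma pairCancel {n : ℕ} (T : Fin n → Bool) (k : ℕ) (hk : k < n) :
    stepSign T (2 * k) + stepSign T (2 * k + 1) = 0 := by
  unfold stepSign
  have h1 : 2 * k < 2 * n := by omega
  have h2 : 2 * k + 1 < 2 * n := by omega
  rw [dif_pos h1, dif_pos h2]
  have e1 : (2 * k) / 2 = k := by omega
  have e2 : (2 * k + 1) / 2 = k := by omega
  have m1 : (2 * k) % 2 = 0 := by omega
  have m2 : (2 * k + 1) % 2 = 1 := by omega
  simp only [e1, e2, m1, m2]
  cases h : T ⟨k, by omega⟩ <;> simp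

lemma sumEven {n : ℕ} (T : Fin n → Bool) (k : ℕ) (hk : k ≤ n) :
    ∑ p ∈ Finset.range (2 * k), stepSign T p = 0 := by
  induction k with
  | zero => simp
  | succ k ih =>
    have h2 : 2 * (k + 1) = 2 * k + 1 + 1 := by ring
    rw [h2, Finset.sum_range_succ, Finset.sum_range_succ, ih (by omega)]
    have := pairCancel T k (by omega)
    omega

lemma stepSignSq {n : ℕ} (T : Fin n → Bool) (p : ℕ) (hp : p < 2 * n) :
    stepSign T p = 1 ∨ stepSign T p = -1 := by
  unfold stepSign
  rw [dif_pos hp]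
  split <;> simp

theorem stmt2 (r θ : ℝ) (hr0 : 0 < r) (hr1 : r < 1) (n : ℕ) (hn : 0 < n)
    (T : Fin n → Bool) :
    tipY r θ T = tipY r θ (fun _ : Fin n => true) := by
  unfold tipY
  rw [Complex.im_sum, Complex.im_sum]
  apply Finset.sum_congr rfl
  intro m hm
  rw [Finset.mem_range] at hm
  have key : ∀ (c : ℝ), (Complex.I * (r : ℂ) ^ m *
      Complex.exp ((c : ℂ) * θ * Complex.I)).im = r ^ m * Real.cos (c * θ) := by
    intro c
    have hc : ((c : ℂ) * θ * Complex.I) = ((c * θ : ℝ) : ℂ) * Complex.I := by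
      push_cast; ring
    rw [hc, Complex.exp_mul_I]
    simp [Complex.mul_im, Complex.mul_re, ← Complex.ofReal_mul, ← Complex.ofReal_pow,
      Complex.cos_ofReal_re, Complex.cos_ofReal_im, Complex.sin_ofReal_re,
      Complex.sin_ofReal_im]
  rcases Nat.even_or_odd m with ⟨k, hk⟩ | ⟨k, hk⟩
  · have hk' : k ≤ n := by omega
    rw [show m = 2 * k by omega, sumEven T k hk', sumEven (fun _ : Fin n => true) k hk']
  · have hk' : 2 * k < 2 * n := by omega
    have hodd : ∀ (S : Fin n → Bool),
        ∑ p ∈ Finset.range m, stepSign S p = stepSign S (2 * k) := by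
      intro S
      rw [show m = 2 * k + 1 by omega, Finset.sum_range_succ, sumEven S k (by omega), zero_add]
    rw [hodd T, hodd (fun _ : Fin n => true)]
    have h1 : stepSign (fun _ : Fin n => true) (2 * k) = 1 := by
      unfold stepSign
      rw [dif_pos hk']
      simp [Nat.mul_mod_right]
    rw [h1]
    rcases stepSignSq T (2 * k) hk' with h | h
    · rw [h]
    · rw [h]
      rw [key (((-1 : ℤ) : ℝ)), key (((1 : ℤ) : ℝ))]
      push_cast
      rw [show (-1 : ℝ) * θ = -(1 * θ) by ring, Real.cos_neg]
end

section
/- For 0 < r < 1, θ real, k a positive integer, and α = e^{iθ}, the branch tip of the path R^k(LR)^∞ is i·(∑_{n=0}^{k} r^n α^{-n} + (r^{k+1} α^{-(k-1)} + r^{k+2} α^{-k})/(1-r²)), and its imaginary part equals ∑_{n=0}^{k} r^n cos(nθ) + (r^{k+1} cos((k-1)θ) + r^{k+2} cos(kθ))/(1-r²). -/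
open Complex

lemma aux_re (s θ : ℝ) (m : ℤ) :
    ((s : ℂ) * (Complex.exp (θ * Complex.I)) ^ m).re = s * Real.cos (m * θ) := by
  rw [← Complex.exp_int_mul]
  have h : (m : ℂ) * ((θ : ℂ) * Complex.I) = (((m : ℝ) * θ : ℝ) : ℂ) * Complex.I := by
    push_cast; ring
  rw [h, Complex.re_ofReal_mul, Complex.exp_ofReal_mul_I_re]

theorem stmt3 (r θ : ℝ) (hr0 : 0 < r) (hr1 : r < 1) (k : ℕ) (hk : 0 < k) :
    let α : ℂ := Complex.exp (θ * Complex.I)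
    let tip : ℂ :=
      (∑ n ∈ Finset.range (k + 1), Complex.I * (r : ℂ) ^ n * α ^ (-(n : ℤ)))
      + ∑' j : ℕ,
          (Complex.I * (r : ℂ) ^ (k + 2 * j + 1) * α ^ (-((k : ℤ) - 1))
            + Complex.I * (r : ℂ) ^ (k + 2 * j + 2) * α ^ (-(k : ℤ)))
    tip = Complex.I *
        ((∑ n ∈ Finset.range (k + 1), (r : ℂ) ^ n * α ^ (-(n : ℤ)))
          + ((r : ℂ) ^ (k + 1) * α ^ (-((k : ℤ) - 1)) + (r : ℂ) ^ (k + 2) * α ^ (-(k : ℤ)))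
              / (1 - (r : ℂ) ^ 2))
    ∧ tip.im = (∑ n ∈ Finset.range (k + 1), r ^ n * Real.cos (n * θ))
        + (r ^ (k + 1) * Real.cos (((k : ℝ) - 1) * θ) + r ^ (k + 2) * Real.cos (k * θ))
            / (1 - r ^ 2) := by
  intro α tip
  have hr2 : r ^ 2 < 1 := by nlinarith
  have hne : (1 : ℂ) - (r : ℂ) ^ 2 ≠ 0 := by
    intro h
    have : ((1 - r ^ 2 : ℝ) : ℂ) = 0 := by push_cast; linear_combination h
    have := Complex.ofReal_eq_zero.mp this
    nlinarith
  set c : ℂ := Complex.I * (r : ℂ) ^ (k + 1) * α ^ (-((k : ℤ) - 1))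
      + Complex.I * (r : ℂ) ^ (k + 2) * α ^ (-(k : ℤ)) with hc
  have hterm : ∀ j : ℕ,
      (Complex.I * (r : ℂ) ^ (k + 2 * j + 1) * α ^ (-((k : ℤ) - 1))
        + Complex.I * (r : ℂ) ^ (k + 2 * j + 2) * α ^ (-(k : ℤ)))
      = ((r : ℂ) ^ 2) ^ j * c := by
    intro j; rw [hc]; ring
  have hnorm : ‖((r : ℂ) ^ 2)‖ < 1 := by
    rw [norm_pow, Complex.norm_real]
    rw [Real.norm_eq_abs, abs_of_pos hr0]; exact hr2
  have hts : (∑' j : ℕ,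
      (Complex.I * (r : ℂ) ^ (k + 2 * j + 1) * α ^ (-((k : ℤ) - 1))
        + Complex.I * (r : ℂ) ^ (k + 2 * j + 2) * α ^ (-(k : ℤ))))
      = (1 - (r : ℂ) ^ 2)⁻¹ * c := by
    simp_rw [hterm]
    rw [tsum_mul_right, tsum_geometric_of_norm_lt_one hnorm, mul_comm]
  have h1 : tip = Complex.I *
      ((∑ n ∈ Finset.range (k + 1), (r : ℂ) ^ n * α ^ (-(n : ℤ)))
        + ((r : ℂ) ^ (k + 1) * α ^ (-((k : ℤ) - 1)) + (r : ℂ) ^ (k + 2) * α ^ (-(k : ℤ)))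
            / (1 - (r : ℂ) ^ 2)) := by
    show _ + _ = _
    rw [hts, hc]
    conv_rhs => rw [mul_add, Finset.mul_sum]
    congr 1
    · exact Finset.sum_congr rfl fun n _ => by ring
    · field_simp
  refine ⟨h1, ?_⟩
  rw [h1, Complex.I_mul_im, Complex.add_re, Complex.re_sum]
  congr 1
  · refine Finset.sum_congr rfl fun n _ => ?_
    rw [← Complex.ofReal_pow, aux_re]
    push_cast
    rw [show -((n:ℝ)) * θ = -((n:ℝ) * θ) by ring, Real.cos_neg]
  · have hden : (1 : ℂ) - (r : ℂ) ^ 2 = ((1 - r ^ 2 : ℝ) : ℂ) := by push_cast; ring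
    rw [hden, Complex.div_ofReal_re, Complex.add_re,
      ← Complex.ofReal_pow, ← Complex.ofReal_pow, aux_re, aux_re]
    push_cast
    rw [show (-((k:ℝ) - 1)) * θ = -(((k:ℝ) - 1) * θ) by ring,
      show (-(k:ℝ)) * θ = -((k:ℝ) * θ) by ring, Real.cos_neg, Real.cos_neg]
end

section
/- Let k ≥ 3 be an integer and θ = 360°/k (i.e. θ = 2π/k radians). Define f(r) = ∑_{n=0}^{k} r^n cos(nθ) + (r^{k+1} cos(θ) + r^{k+2} - 1 - r cos θ)/(1-r²) for 0 < r < 1. Then lim_{r→1⁻} f(r) = -(k/2)(1 + cos θ). -/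
open Real Filter Finset

/-! The numerator vanishes at `r = 1`; after cancelling `1 - r` against `1 - r ^ 2` with geometric sums,
`f` extends continuously to `r = 1`. There the cosine sum is `1`, because the `k`-th roots of unity
sum to zero and `cos (k θ) = 1`, and the cancelled quotient is `-(k cos θ + k + 2) / 2`. -/

lemma sum_range_cos_mul_two_pi_div_eq_zero {k : ℕ} (hk : 2 ≤ k) :
    ∑ n ∈ range k, cos (n * (2 * π / k)) = 0 := by
  have hζ := Complex.isPrimitiveRoot_exp k (by omega)
  have hre := congrArg Complex.re (hζ.geom_sum_eq_zero (by omega))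
  rw [Complex.re_sum, Complex.zero_re] at hre
  convert hre using 2 with n
  rw [← Complex.exp_nat_mul, ← Complex.exp_ofReal_mul_I_re]
  push_cast
  ring_nf

lemma sum_range_succ_cos_mul_two_pi_div {k : ℕ} (hk : 2 ≤ k) :
    ∑ n ∈ range (k + 1), cos (n * (2 * π / k)) = 1 := by
  have hk0 : (k : ℝ) ≠ 0 := by positivity
  rw [sum_range_succ, sum_range_cos_mul_two_pi_div_eq_zero hk, mul_div_cancel₀ _ hk0, cos_two_pi,
    zero_add]

lemma div_one_sub_sq_eq_neg_geom_sum_div (c r : ℝ) (k : ℕ) (hr : r ≠ 1) :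
    (r ^ (k + 1) * c + r ^ (k + 2) - 1 - r * c) / (1 - r ^ 2)
      = -(c * r * ∑ i ∈ range k, r ^ i + ∑ i ∈ range (k + 2), r ^ i) / (1 + r) := by
  have hr' : r - 1 ≠ 0 := sub_ne_zero.mpr hr
  have hnum : r ^ (k + 1) * c + r ^ (k + 2) - 1 - r * c
      = (c * r * ∑ i ∈ range k, r ^ i + ∑ i ∈ range (k + 2), r ^ i) * (r - 1) := by
    rw [add_mul, mul_assoc, geom_sum_mul, geom_sum_mul]
    ring
  rw [hnum, show 1 - r ^ 2 = -((1 + r) * (r - 1)) by ring, div_neg, mul_div_mul_right _ _ hr',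
    neg_div]

theorem stmt4 (k : ℕ) (hk : 3 ≤ k) (θ : ℝ) (hθ : θ = 2 * π / k) :
    Filter.Tendsto
      (fun r : ℝ =>
        (∑ n ∈ Finset.range (k + 1), r ^ n * Real.cos (n * θ))
          + (r ^ (k + 1) * Real.cos θ + r ^ (k + 2) - 1 - r * Real.cos θ) / (1 - r ^ 2))
      (nhdsWithin 1 (Set.Iio 1))
      (nhds (-(k / 2 : ℝ) * (1 + Real.cos θ))) := by
  set g : ℝ → ℝ := fun r => (∑ n ∈ range (k + 1), r ^ n * cos (n * θ))
      + -(cos θ * r * ∑ i ∈ range k, r ^ i + ∑ i ∈ range (k + 2), r ^ i) / (1 + r)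
  have hfg : ∀ r ∈ Set.Iio (1 : ℝ), g r = (∑ n ∈ range (k + 1), r ^ n * cos (n * θ))
      + (r ^ (k + 1) * cos θ + r ^ (k + 2) - 1 - r * cos θ) / (1 - r ^ 2) := fun r hr => by
    rw [div_one_sub_sq_eq_neg_geom_sum_div _ _ _ (ne_of_lt hr)]
  have hg1 : g 1 = -(k / 2 : ℝ) * (1 + cos θ) := by
    simp only [g, one_pow, one_mul, mul_one, sum_const, card_range, nsmul_eq_mul]
    rw [hθ, sum_range_succ_cos_mul_two_pi_div (by omega)]
    push_cast
    ring
  have hg : ContinuousAt g 1 :=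
    ContinuousAt.add (by fun_prop) (ContinuousAt.div (by fun_prop) (by fun_prop) (by norm_num))
  rw [← hg1]
  exact (hg.continuousWithinAt.tendsto).congr' (eventually_nhdsWithin_of_forall hfg)
end

section
/- Let k ≥ 3 be an integer and suppose 2π/k < θ < 2π/(k-1). Then N(θ) = cos((k-1)θ) + cos(kθ) - 1 - cos(θ) > 0. -/
open Real

lemma key_ident (a s : ℝ) :
    Real.cos (2*s - 2*a) + Real.cos (2*s) - 1 - Real.cos (2*a)
      = -4 * Real.cos a * Real.sin s * (Real.sin s * Real.cos a - Real.cos s * Real.sin a) := by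
  rw [show (2:ℝ)*s - 2*a = (s-a) + (s-a) by ring, show (2:ℝ)*s = s + s by ring,
      show (2:ℝ)*a = a + a by ring]
  rw [Real.cos_add, Real.cos_add, Real.cos_add, Real.cos_sub, Real.sin_sub]
  linear_combination (Real.sin a ^ 2 + 3 * Real.cos a ^ 2 - 1) * Real.sin_sq_add_cos_sq s
    + (2 - 2 * Real.cos s ^ 2) * Real.sin_sq_add_cos_sq a

theorem stmt7 (k : ℕ) (hk : 3 ≤ k) (θ : ℝ) (h1 : 2 * π / k < θ) (h2 : θ < 2 * π / (k - 1 : ℝ)) :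
    0 < Real.cos (((k : ℝ) - 1) * θ) + Real.cos (k * θ) - 1 - Real.cos θ := by
  have hπ := Real.pi_pos
  have hk3 : (3:ℝ) ≤ (k:ℝ) := by exact_mod_cast hk
  have hkpos : (0:ℝ) < (k:ℝ) := by linarith
  have hk1 : (0:ℝ) < (k:ℝ) - 1 := by linarith
  -- basic bounds on θ
  have hθpos : 0 < θ := lt_trans (by positivity) h1
  have hkθ : 2 * π < k * θ := by
    have := (div_lt_iff₀ hkpos).mp h1
    linarith
  have hk1θ : ((k:ℝ) - 1) * θ < 2 * π := by
    have := (lt_div_iff₀ hk1).mp h2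
    linarith
  have hθπ : θ < π := by
    have : θ < 2 * π / ((k:ℝ) - 1) := h2
    have h2' : 2 * π / ((k:ℝ) - 1) ≤ π := by
      rw [div_le_iff₀ hk1]; nlinarith
    linarith
  -- set half angles
  set a := θ / 2 with ha
  set s := k * θ / 2 with hs
  have hident := key_ident a s
  have e1 : 2*s - 2*a = ((k:ℝ) - 1) * θ := by rw [ha, hs]; ring
  have e2 : 2*s = (k:ℝ) * θ := by rw [hs]; ring
  have e3 : 2*a = θ := by rw [ha]; ring
  rw [e1, e2, e3] at hident
  rw [hident]
  -- sign facts
  have hsin_sub : Real.sin s * Real.cos a - Real.cos s * Real.sin a = Real.sin (s - a) := by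
    rw [Real.sin_sub]
  have hcos_a : 0 < Real.cos a := by
    apply Real.cos_pos_of_mem_Ioo
    constructor
    · rw [ha]; linarith
    · rw [ha]; linarith
  have hsin_s : Real.sin s < 0 := by
    have h1' : π < s := by rw [hs]; linarith
    have h2' : s < 2 * π := by rw [hs]; nlinarith
    have hpos : 0 < Real.sin (s - π) := by
      apply Real.sin_pos_of_pos_of_lt_pi <;> linarith
    have := Real.sin_pi_sub (s - π)
    rw [show π - (s - π) = 2*π - s by ring] at this
    have h2pi : Real.sin (2*π - s) = -Real.sin s := by
      rw [show 2*π - s = -(s - 2*π) by ring, Real.sin_neg, Real.sin_sub_two_pi]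
    nlinarith [hpos, this, h2pi]
  have hsin_sa : 0 < Real.sin (s - a) := by
    apply Real.sin_pos_of_pos_of_lt_pi
    · rw [hs, ha]; nlinarith
    · rw [hs, ha]; nlinarith
  rw [hsin_sub]
  nlinarith [mul_pos hcos_a hsin_sa, mul_pos (mul_pos hcos_a hsin_sa) (neg_pos.mpr hsin_s)]
end

section
/- Let k ≥ 3 be an integer, θ real with 2π/k < θ < 2π/(k-1), and define f_θ(r) = ∑_{n=0}^{k} r^n cos(nθ) + (r^{k+1} cos((k-1)θ) + r^{k+2} cos(kθ) - 1 - r cos θ)/(1-r²) for 0 < r < 1. Then lim_{r→1⁻} f_θ(r) = +∞. -/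
open Real Filter Topology

lemma trig_identity (s x : ℝ) :
    Real.cos (2*s - 2*x) + Real.cos (2*s) - 1 - Real.cos (2*x)
      = -4 * Real.cos x * Real.sin s * (Real.sin s * Real.cos x - Real.cos s * Real.sin x) := by
  rw [show 2*s - 2*x = 2*(s-x) by ring, Real.cos_two_mul, Real.cos_two_mul, Real.cos_two_mul,
    Real.cos_sub]
  nlinarith [Real.sin_sq_add_cos_sq s, Real.sin_sq_add_cos_sq x]

theorem stmt9 (k : ℕ) (hk : 3 ≤ k) (θ : ℝ) (h1 : 2 * π / k < θ) (h2 : θ < 2 * π / (k - 1 : ℝ)) :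
    Filter.Tendsto
      (fun r : ℝ =>
        (∑ n ∈ Finset.range (k + 1), r ^ n * Real.cos (n * θ))
          + (r ^ (k + 1) * Real.cos (((k : ℝ) - 1) * θ) + r ^ (k + 2) * Real.cos (k * θ)
              - 1 - r * Real.cos θ) / (1 - r ^ 2))
      (nhdsWithin 1 (Set.Ioo 0 1)) Filter.atTop := by
  have hπ : (0:ℝ) < π := Real.pi_pos
  have hk1 : (1:ℝ) < (k:ℝ) - 1 := by
    have : (3:ℝ) ≤ (k:ℝ) := by exact_mod_cast hk
    linarith
  have hk0 : (0:ℝ) < (k:ℝ) := by linarith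
  have hθ0 : 0 < θ := lt_trans (by positivity) h1
  have hkθ : 2 * π < (k:ℝ) * θ := by
    rw [div_lt_iff₀ hk0] at h1; linarith [h1]
  have hk1θ : ((k:ℝ) - 1) * θ < 2 * π := by
    rw [lt_div_iff₀ (by linarith : (0:ℝ) < (k:ℝ) - 1)] at h2; linarith
  have hk2 : (2:ℝ) ≤ (k:ℝ) - 1 := by
    have : (3:ℝ) ≤ (k:ℝ) := by exact_mod_cast hk
    linarith
  have hθπ : θ < π := by nlinarith [hk1θ, hπ, hθ0]
  -- N > 0
  set N : ℝ := Real.cos (((k:ℝ) - 1) * θ) + Real.cos ((k:ℝ) * θ) - 1 - Real.cos θ with hN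
  have hNpos : 0 < N := by
    have hid := trig_identity ((k:ℝ) * θ / 2) (θ / 2)
    have e1 : 2 * ((k:ℝ) * θ / 2) - 2 * (θ/2) = ((k:ℝ) - 1) * θ := by ring
    have e2 : 2 * ((k:ℝ) * θ / 2) = (k:ℝ) * θ := by ring
    have e3 : 2 * (θ/2) = θ := by ring
    rw [e1, e2, e3] at hid
    have hcos : 0 < Real.cos (θ/2) := Real.cos_pos_of_mem_Ioo ⟨by linarith, by linarith⟩
    have hsin1 : Real.sin ((k:ℝ) * θ / 2) < 0 := by
      have h : Real.sin (((k:ℝ) * θ / 2 - π) + π) = - Real.sin ((k:ℝ) * θ / 2 - π) :=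
        Real.sin_add_pi _
      have h' : ((k:ℝ) * θ / 2 - π) + π = (k:ℝ) * θ / 2 := by ring
      rw [h'] at h
      have hpos : 0 < Real.sin ((k:ℝ) * θ / 2 - π) := by
        apply Real.sin_pos_of_pos_of_lt_pi
        · linarith
        · -- k*θ/2 - π < π, i.e. k*θ < 4π. k*θ < k * 2π/(k-1) ≤ 4π
          have h4 : (k:ℝ) * θ < (k:ℝ) * (2 * π / ((k:ℝ) - 1)) :=
            mul_lt_mul_of_pos_left h2 hk0
          have h5 : (k:ℝ) * (2 * π / ((k:ℝ) - 1)) ≤ 4 * π := by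
            rw [mul_div_assoc', div_le_iff₀ (by linarith : (0:ℝ) < (k:ℝ)-1)]
            nlinarith
          linarith
      linarith
    have hsin2 : 0 < Real.sin ((k:ℝ) * θ / 2) * Real.cos (θ/2)
        - Real.cos ((k:ℝ) * θ / 2) * Real.sin (θ/2) := by
      have : Real.sin ((k:ℝ) * θ / 2) * Real.cos (θ/2)
          - Real.cos ((k:ℝ) * θ / 2) * Real.sin (θ/2)
          = Real.sin ((k:ℝ) * θ / 2 - θ/2) := (Real.sin_sub _ _).symm
      rw [this]
      apply Real.sin_pos_of_pos_of_lt_pi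
      · have : (0:ℝ) < ((k:ℝ) - 1) * θ := by positivity
        nlinarith
      · nlinarith
    rw [hN, hid]
    have h6 := mul_pos hcos hsin2
    nlinarith
  -- continuity pieces
  set g : ℝ → ℝ := fun r => ∑ n ∈ Finset.range (k + 1), r ^ n * Real.cos (n * θ) with hg
  set num : ℝ → ℝ := fun r => r ^ (k + 1) * Real.cos (((k:ℝ) - 1) * θ)
      + r ^ (k + 2) * Real.cos ((k:ℝ) * θ) - 1 - r * Real.cos θ with hnum
  have hgc : Continuous g := by
    apply continuous_finset_sum
    intro n _
    exact (continuous_pow n).mul continuous_const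
  have hnumc : Continuous num := by
    apply Continuous.sub
    apply Continuous.sub
    apply Continuous.add
    · exact (continuous_pow (k+1)).mul continuous_const
    · exact (continuous_pow (k+2)).mul continuous_const
    · exact continuous_const
    · exact continuous_id.mul continuous_const
  have hgt : Tendsto g (nhdsWithin 1 (Set.Ioo 0 1)) (𝓝 (g 1)) :=
    (hgc.continuousAt.tendsto).mono_left nhdsWithin_le_nhds
  have hnumt : Tendsto num (nhdsWithin 1 (Set.Ioo 0 1)) (𝓝 N) := by
    have : num 1 = N := by simp [hnum, hN]
    rw [← this]
    exact (hnumc.continuousAt.tendsto).mono_left nhdsWithin_le_nhds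
  have hdent : Tendsto (fun r : ℝ => 1 - r ^ 2) (nhdsWithin 1 (Set.Ioo 0 1)) (𝓝[>] 0) := by
    apply tendsto_nhdsWithin_of_tendsto_nhds_of_eventually_within
    · have hc : Continuous (fun r : ℝ => 1 - r ^ 2) := continuous_const.sub (continuous_pow 2)
      have := (hc.continuousAt (x := (1:ℝ))).tendsto.mono_left
        (nhdsWithin_le_nhds (s := Set.Ioo (0:ℝ) 1))
      simpa using this
    · filter_upwards [self_mem_nhdsWithin] with r hr
      have := hr.1
      have := hr.2
      simp only [Set.mem_Ioi]
      nlinarith [hr.1, hr.2]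
  have hinv : Tendsto (fun r : ℝ => (1 - r ^ 2)⁻¹) (nhdsWithin 1 (Set.Ioo 0 1)) atTop :=
    tendsto_inv_nhdsGT_zero.comp hdent
  have hfrac : Tendsto (fun r : ℝ => num r / (1 - r ^ 2))
      (nhdsWithin 1 (Set.Ioo 0 1)) atTop := by
    simp only [div_eq_mul_inv]
    exact Filter.Tendsto.pos_mul_atTop hNpos hnumt hinv
  have := Filter.Tendsto.add_atTop hgt hfrac
  simpa [hg, hnum] using this
end

section
/- For 2π/3 < θ < π (120° < θ < 180°), the value r_T = -1/(2cos θ) satisfies 1/2 < r_T < 1, and at r = r_T with k = 3, the numerator identity holds: r_T^4 cos(2θ) + r_T^5 cos(3θ) - 1 - r_T cos θ + (1 - r_T²)∑_{n=0}^{3} r_T^n cos(nθ) = 0, i.e. f_θ(r_T) = 0. -/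
open Real

theorem stmt12 (θ : ℝ) (h1 : 2 * π / 3 < θ) (h2 : θ < π) :
    let rT : ℝ := -1 / (2 * Real.cos θ)
    (1 / 2 < rT ∧ rT < 1)
    ∧ rT ^ 4 * Real.cos (2 * θ) + rT ^ 5 * Real.cos (3 * θ) - 1 - rT * Real.cos θ
        + (1 - rT ^ 2) * ∑ n ∈ Finset.range 4, rT ^ n * Real.cos (n * θ) = 0
    ∧ (∑ n ∈ Finset.range 4, rT ^ n * Real.cos (n * θ))
        + (rT ^ 4 * Real.cos (2 * θ) + rT ^ 5 * Real.cos (3 * θ) - 1 - rT * Real.cos θ)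
            / (1 - rT ^ 2) = 0 := by
  intro rT
  have hpi := Real.pi_pos
  have hc1 : Real.cos θ < -1/2 := by
    have : Real.cos θ < Real.cos (2 * π / 3) := by
      apply Real.cos_lt_cos_of_nonneg_of_le_pi (by positivity) (le_of_lt h2) h1
    rw [show (2:ℝ) * π / 3 = π - π/3 by ring, Real.cos_pi_sub, Real.cos_pi_div_three] at this
    linarith
  have hc2 : -1 < Real.cos θ := by
    have : Real.cos π < Real.cos θ := by
      apply Real.cos_lt_cos_of_nonneg_of_le_pi (by nlinarith) le_rfl h2
    rwa [Real.cos_pi] at this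
  set c := Real.cos θ with hc
  have hcne : c ≠ 0 := by intro h; rw [h] at hc1; norm_num at hc1
  have hcneg : c < 0 := by linarith
  have hmul : rT * (2*c) = -1 := by
    show -1/(2*c) * (2*c) = -1
    field_simp
  have hb1 : 1/2 < rT := by nlinarith [hmul, hc1, hc2, hcneg]
  have hb2 : rT < 1 := by nlinarith [hmul, hc1, hc2, hcneg]
  have h2c : Real.cos (2*θ) = 2*c^2 - 1 := by
    rw [Real.cos_two_mul]
  have h3c : Real.cos (3*θ) = 4*c^3 - 3*c := by
    rw [Real.cos_three_mul]
  have hS : ∑ n ∈ Finset.range 4, rT ^ n * Real.cos (n * θ)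
      = 1 + rT * c + rT^2 * (2*c^2-1) + rT^3 * (4*c^3-3*c) := by
    rw [Finset.sum_range_succ, Finset.sum_range_succ, Finset.sum_range_succ,
      Finset.sum_range_one]
    push_cast
    rw [show (2:ℝ)*θ = 2*θ by ring, show (3:ℝ)*θ = 3*θ by ring, h2c, h3c]
    norm_num
    exact Or.inl hc.symm
  have hrT : rT = -1/(2*c) := rfl
  have hnum : rT ^ 4 * Real.cos (2 * θ) + rT ^ 5 * Real.cos (3 * θ) - 1 - rT * c
      + (1 - rT ^ 2) * ∑ n ∈ Finset.range 4, rT ^ n * Real.cos (n * θ) = 0 := by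
    rw [hS, h2c, h3c, hrT]
    field_simp
    ring
  refine ⟨⟨hb1, hb2⟩, hnum, ?_⟩
  have hden : 1 - rT^2 ≠ 0 := by nlinarith
  field_simp
  rw [show θ*2 = 2*θ by ring, show θ*3 = 3*θ by ring]
  linear_combination hnum
end

section
/- For θ with kθ = π exactly (k a positive integer ≥ 2, θ = π/k), the difference of y-coordinates g_θ(r) = y_m - y_k satisfies lim_{r→0⁺} g_θ(r)/r^{k+2} = 1 - cos(2θ) > 0. -/
open Real Filter

theorem stmt15 (k : ℕ) (hk : 2 ≤ k) (θ : ℝ) (hθ : θ = π / k) :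
    let m : ℕ := 3 * k
    Filter.Tendsto
      (fun r : ℝ =>
        ((∑ n ∈ Finset.Icc (k + 1) m, r ^ n * Real.cos (n * θ))
          + (r ^ (m + 1) * Real.cos (((m : ℝ) - 1) * θ) + r ^ (m + 2) * Real.cos (m * θ)
              - r ^ (k + 1) * Real.cos (((k : ℝ) - 1) * θ)
              - r ^ (k + 2) * Real.cos (k * θ)) / (1 - r ^ 2)) / r ^ (k + 2))
      (nhdsWithin 0 (Set.Ioi 0))
      (nhds (1 - Real.cos (2 * θ)))
    ∧ 0 < 1 - Real.cos (2 * θ) := by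
  intro m
  have hm : m = 3 * k := rfl
  have hk0 : (k : ℝ) ≠ 0 := by positivity
  have hk1 : (1 : ℝ) < k := by exact_mod_cast lt_of_lt_of_le one_lt_two hk
  have hkθ : (k : ℝ) * θ = π := by rw [hθ]; field_simp
  have hθpos : 0 < θ := by rw [hθ]; positivity
  have hθlt : θ < π := by rw [hθ]; exact div_lt_self pi_pos hk1
  have hck : Real.cos ((k : ℝ) * θ) = -1 := by rw [hkθ, Real.cos_pi]
  have hck1 : Real.cos (((k : ℝ) + 1) * θ) = -Real.cos θ := by
    have h : ((k : ℝ) + 1) * θ = π + θ := by rw [← hkθ]; ring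
    rw [h]; simp [Real.cos_add]
  have hckm1 : Real.cos (((k : ℝ) - 1) * θ) = -Real.cos θ := by
    have h : ((k : ℝ) - 1) * θ = π - θ := by rw [← hkθ]; ring
    rw [h, Real.cos_pi_sub]
  have hck2 : Real.cos (((k : ℝ) + 2) * θ) = -Real.cos (2 * θ) := by
    have h : ((k : ℝ) + 2) * θ = π + 2 * θ := by rw [← hkθ]; ring
    rw [h]; simp [Real.cos_add]
  constructor
  · -- the limit
    set H : ℝ → ℝ := fun r =>
      (Real.cos θ * r + r ^ (m - k - 1) * Real.cos (((m : ℝ) - 1) * θ)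
        + r ^ (m - k) * Real.cos ((m : ℝ) * θ) + 1) / (1 - r ^ 2)
      + ∑ n ∈ Finset.Icc (k + 2) m, r ^ (n - (k + 2)) * Real.cos (n * θ) with hH
    have hHc : ContinuousAt H 0 := by
      apply ContinuousAt.add
      · apply ContinuousAt.div
        · fun_prop
        · fun_prop
        · norm_num
      · exact (continuous_finset_sum _ (fun n _ => by fun_prop)).continuousAt
    have hH0 : H 0 = 1 - Real.cos (2 * θ) := by
      have hsum : ∑ n ∈ Finset.Icc (k + 2) m, (0:ℝ) ^ (n - (k + 2)) * Real.cos (n * θ)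
          = Real.cos (((k:ℝ) + 2) * θ) := by
        rw [Finset.sum_eq_single_of_mem (k + 2)
          (by simp [Finset.mem_Icc]; omega)
          (fun n hn hne => by
            simp only [Finset.mem_Icc] at hn
            rw [zero_pow (by omega), zero_mul])]
        push_cast
        norm_num
      rw [hH]
      simp only
      rw [hsum, hck2]
      rw [zero_pow (by omega : m - k - 1 ≠ 0), zero_pow (by omega : m - k ≠ 0)]
      norm_num
      ring
    have hHt : Tendsto H (nhdsWithin 0 (Set.Ioi 0)) (nhds (1 - Real.cos (2 * θ))) := by
      rw [← hH0]
      exact hHc.tendsto.mono_left nhdsWithin_le_nhds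
    apply hHt.congr'
    have hIoo : Set.Ioo (0:ℝ) 1 ∈ nhdsWithin 0 (Set.Ioi 0) :=
      Ioo_mem_nhdsGT_of_mem (by constructor <;> norm_num)
    filter_upwards [hIoo] with r hr
    obtain ⟨hr0, hr1⟩ := hr
    simp only [hH]
    have hrne : r ≠ 0 := ne_of_gt hr0
    have hden : 1 - r ^ 2 ≠ 0 := by nlinarith
    have hbne : r ^ (k + 1) ≠ 0 := pow_ne_zero _ hrne
    have hsplit : ∑ n ∈ Finset.Icc (k + 1) m, r ^ n * Real.cos (n * θ)
        = r ^ (k + 1) * Real.cos (((k:ℝ) + 1) * θ)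
          + r ^ (k + 2) * ∑ n ∈ Finset.Icc (k + 2) m, r ^ (n - (k + 2)) * Real.cos (n * θ) := by
      have h1 : Finset.Icc (k + 1) m = insert (k + 1) (Finset.Icc (k + 2) m) := by
        ext n; simp only [Finset.mem_Icc, Finset.mem_insert]; omega
      rw [h1, Finset.sum_insert (by simp [Finset.mem_Icc])]
      congr 1
      · push_cast; ring_nf
      · rw [Finset.mul_sum]
        apply Finset.sum_congr rfl
        intro n hn
        simp only [Finset.mem_Icc] at hn
        rw [show r ^ n = r ^ (k + 2) * r ^ (n - (k + 2)) by
          rw [← pow_add]; congr 1; omega, mul_assoc]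
    rw [hsplit, hck1, hckm1, hck]
    generalize (∑ n ∈ Finset.Icc (k + 2) m, r ^ (n - (k + 2)) * Real.cos (n * θ)) = S
    have e2 : r ^ (m + 1) = r ^ (m - k - 1) * r ^ (k + 2) := by
      rw [← pow_add]; congr 1; omega
    have e3 : r ^ (m + 2) = r ^ (m - k) * r ^ (k + 2) := by
      rw [← pow_add]; congr 1; omega
    rw [e2, e3, show r ^ (k + 2) = r ^ (k + 1) * r from pow_succ r (k + 1)]
    field_simp
    ring
  · -- positivity
    have hs : 0 < Real.sin θ := Real.sin_pos_of_pos_of_lt_pi hθpos hθlt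
    nlinarith [Real.cos_two_mul θ, Real.sin_sq_add_cos_sq θ, mul_pos hs hs]
end

section
/- The zeros of N(θ) = cos((m-1)θ) + cos(mθ) - cos((k-1)θ) - cos(kθ), where k = ⌈π/θ⌉ and m = ⌈3π/θ⌉, include all angles of the form θ = 4π/p (in radians; equivalently 720°/p) for integers p ≥ 4 with 4π/p < π. Specifically, for θ = 4π/p with p ≥ 5, N(θ) = 0. -/
open Real

/-!
With `θ = 4π/p` we get `k = ⌈p/4⌉` and `m = ⌈3p/4⌉`. For even `p` the indices satisfy
`m = k + p/2`, so `mθ = kθ + 2π` and both cosine pairs agree term by term. For odd `p` they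
satisfy `m + k = p + 1`, so `mθ = 4π - (k - 1)θ` and `(m - 1)θ = 4π - kθ`: the pairs agree
after swapping their terms.
-/

theorem Nat.ceil_natCast_div_natCast {K : Type*} [Field K] [LinearOrder K] [IsStrictOrderedRing K]
    [FloorSemiring K] (a b : ℕ) : ⌈(a : K) / b⌉₊ = a ⌈/⌉ b := by
  rcases b.eq_zero_or_pos with rfl | hb
  · simp
  refine eq_of_forall_ge_iff fun c ↦ ?_
  rw [Nat.ceil_le, ceilDiv_le_iff_le_mul hb, div_le_iff₀ (by exact_mod_cast hb), mul_comm]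
  exact_mod_cast Iff.rfl

section CosPair

variable {θ a b : ℝ} (n : ℤ)

theorem cos_sub_one_mul_add_cos_mul_eq_of_sub_mul (h : (b - a) * θ = n * (2 * π)) :
    cos ((b - 1) * θ) + cos (b * θ) = cos ((a - 1) * θ) + cos (a * θ) := by
  rw [show b * θ = a * θ + n * (2 * π) by linarith,
    show (b - 1) * θ = (a - 1) * θ + n * (2 * π) by linarith,
    cos_add_int_mul_two_pi, cos_add_int_mul_two_pi]

theorem cos_sub_one_mul_add_cos_mul_eq_of_add_sub_one_mul (h : (a + b - 1) * θ = n * (2 * π)) :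
    cos ((b - 1) * θ) + cos (b * θ) = cos ((a - 1) * θ) + cos (a * θ) := by
  rw [show b * θ = n * (2 * π) - (a - 1) * θ by linarith,
    show (b - 1) * θ = n * (2 * π) - a * θ by linarith,
    cos_int_mul_two_pi_sub, cos_int_mul_two_pi_sub, add_comm]

end CosPair

theorem stmt16 (p : ℕ) (hp : 5 ≤ p) :
    let θ : ℝ := 4 * π / p
    let k : ℕ := ⌈π / θ⌉₊
    let m : ℕ := ⌈3 * π / θ⌉₊
    Real.cos (((m : ℝ) - 1) * θ) + Real.cos (m * θ)
      - Real.cos (((k : ℝ) - 1) * θ) - Real.cos (k * θ) = 0 := by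
  intro θ k m
  have hp0 : (p : ℝ) ≠ 0 := by positivity
  have hk : k = (p + 3) / 4 := by
    rw [show k = ⌈(p : ℝ) / (4 : ℕ)⌉₊ by simp only [k, θ]; congr 1; push_cast; field_simp,
      Nat.ceil_natCast_div_natCast]
    rfl
  have hm : m = (3 * p + 3) / 4 := by
    rw [show m = ⌈((3 * p : ℕ) : ℝ) / (4 : ℕ)⌉₊ by simp only [m, θ]; congr 1; push_cast; field_simp,
      Nat.ceil_natCast_div_natCast]
    rfl
  rw [sub_sub, sub_eq_zero]
  rcases Nat.even_or_odd p with ⟨q, rfl⟩ | hodd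
  · have hmk : m = k + q := by omega
    refine cos_sub_one_mul_add_cos_mul_eq_of_sub_mul 1 ?_
    have hq : (q : ℝ) ≠ 0 := by norm_cast; omega
    simp only [hmk, θ]
    push_cast
    field_simp
    ring
  · have hmk : k + m = p + 1 := by obtain ⟨q, rfl⟩ := hodd; omega
    refine cos_sub_one_mul_add_cos_mul_eq_of_add_sub_one_mul 2 ?_
    rw [show (k : ℝ) + m - 1 = p by linarith [(by exact_mod_cast hmk : (k : ℝ) + m = p + 1)]]
    simp only [θ]
    field_simp
    ring
end
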